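/- Let n ≥ 7 and let T be a strongly connected tournament of order n with diameter n−3 belonging to the class H_{n−3,n}, with parameters h_1, h_2, h_3, h_4 as in the standard description of H_{n−3,n}. If h_3 ≤ h_2 − 1, then the number of circuits of length 4 in T equals n−1. -/
import Mathlib


/-- A tournament on a vertex type `V`: every ordered pair of distinct vertices
carries exactly one arc. `adj v w = true` means there is an arc from `v` to `w`
(`v` dominates `w`). -/
structure Tournament (V : Type*) where
  adj : V → V → Bool
  irrefl : ∀ v, adj v v = false
  compl : ∀ v w, v ≠ w → adj v w = !adj w v

namespace Tournament

variable {V : Type*} {W : Type*}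

/-- The subtournament induced on a set of vertices. -/
def restrict (T : Tournament V) (s : Set V) : Tournament s where
  adj a b := T.adj a b
  irrefl a := T.irrefl a
  compl a b h := T.compl a b (fun hab => h (Subtype.ext hab))

/-- A tournament is strongly connected if every vertex can be reached from
every other one by a directed path. -/
def Strong (T : Tournament V) : Prop :=
  ∀ v w : V, Relation.ReflTransGen (fun a b => T.adj a b = true) v w

/-- A vertex of a tournament is non-critical if deleting it leaves a strongly
connected tournament. -/
def Noncritical (T : Tournament V) (w : V) : Prop :=
  (T.restrict {x | x ≠ w}).Strong

/-- There is a directed walk of length `k` from `v` to `w`. -/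
def HasWalk (T : Tournament V) (v w : V) (k : ℕ) : Prop :=
  ∃ f : Fin (k + 1) → V, f 0 = v ∧ f (Fin.last k) = w ∧
    ∀ i : Fin k, T.adj (f i.castSucc) (f i.succ) = true

/-- The distance from `v` to `w`: the length of a shortest directed path. -/
noncomputable def dist (T : Tournament V) (v w : V) : ℕ :=
  sInf {k | T.HasWalk v w k}

/-- The diameter: the maximum distance over ordered pairs of distinct vertices. -/
noncomputable def diam (T : Tournament V) : ℕ :=
  sSup {m | ∃ v w : V, v ≠ w ∧ T.dist v w = m}

/-- Cyclic successor on `Fin ℓ`. -/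
def cyc {ℓ : ℕ} (i : Fin ℓ) : Fin ℓ :=
  if h : i.val + 1 < ℓ then ⟨i.val + 1, h⟩ else ⟨0, i.pos⟩

/-- The number of circuits (directed cycles through distinct vertices) of
length `ℓ` in `T`.  Each circuit is represented by exactly `ℓ` cyclic
parametrisations, whence the division. -/
noncomputable def circCount (T : Tournament V) (ℓ : ℕ) : ℕ :=
  Nat.card {f : Fin ℓ → V // Function.Injective f ∧
    ∀ i : Fin ℓ, T.adj (f i) (f (cyc i)) = true} / ℓ

/-- The number of circuits of length `ℓ` in `T` passing through the vertex `w`. -/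
noncomputable def circCountAt (T : Tournament V) (ℓ : ℕ) (w : V) : ℕ :=
  Nat.card {f : Fin ℓ → V // Function.Injective f ∧
    (∀ i : Fin ℓ, T.adj (f i) (f (cyc i)) = true) ∧ ∃ i, f i = w} / ℓ

/-- The number of strongly connected subtournaments of order `ℓ` in `T`. -/
noncomputable def strongSubCount (T : Tournament V) (ℓ : ℕ) : ℕ :=
  Nat.card {s : Finset V // s.card = ℓ ∧ (T.restrict ↑s).Strong}

/-- Isomorphism of tournaments. -/
def Iso (T : Tournament V) (S : Tournament W) : Prop :=
  ∃ e : V ≃ W, ∀ a b : V, T.adj a b = S.adj (e a) (e b)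

/-- Build a tournament from the function `f` recording which arcs point
"upwards" with respect to a linear order on the vertices. -/
def ofFn [LinearOrder V] (f : V → V → Bool) : Tournament V where
  adj u v := if u < v then f u v else if v < u then !f v u else false
  irrefl v := by simp
  compl u v h := by
    rcases lt_trichotomy u v with h1 | h1 | h1
    · simp [h1, not_lt_of_gt h1]
    · exact absurd h1 h
    · simp [h1, not_lt_of_gt h1]

/-- The tournament `T_{n-1,n}(z_0,…,z_{n-1})`: `z_i → z_{i+1}` and `z_j → z_i`
for `j > i + 1`. -/
def lineT (n : ℕ) : Tournament (Fin n) :=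
  ofFn fun i j => decide (j.val = i.val + 1)

end Tournament
namespace Statement18

open Tournament

variable {V : Type}

structure Good (m : ℕ) (V : Type) (T : Tournament V) (v : Fin m → V) (w : Fin 4 → V)
    (h : Fin 4 → ℕ) : Prop where
  hm : 3 ≤ m
  hv : Function.Injective v
  hw : Function.Injective w
  hvw : ∀ i j, v i ≠ w j
  hcover : ∀ x : V, (∃ i, v i = x) ∨ (∃ j, w j = x)
  hvadj : ∀ i j, (T.adj (v i) (v j) = true ↔ (j.val = i.val + 1 ∨ j.val + 1 < i.val))
  hwadj : ∀ i j, (T.adj (w i) (w j) = true ↔ i < j)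
  hH : ∀ i k, (T.adj (w i) (v k) = true ↔ k.val + 1 ≤ h i)
  hh1 : h 0 = m - 1
  hh4 : h 3 = 1
  hh2 : 2 ≤ h 1 ∧ h 1 ≤ m - 1
  hh3 : 1 ≤ h 2
  hle : h 2 + 1 ≤ h 1

def vtx (m : ℕ) (v : Fin m → V) (hm : 3 ≤ m) (a : ℕ) : V :=
  v ⟨a % m, Nat.mod_lt _ (by omega)⟩

def Pc (T : Tournament V) (f : Fin 4 → V) : Prop :=
  ∀ i : Fin 4, T.adj (f i) (f (i + 1)) = true

def rot (k : Fin 4) (f : Fin 4 → V) : Fin 4 → V := fun i => f (i + k)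

def Qr (m : ℕ) (v : Fin m → V) (hm : 3 ≤ m) (f : Fin 4 → V) : Prop :=
  ∃ a, a < m ∧ f 0 = vtx m v hm a ∧ ∀ b, b < m → f 3 = vtx m v hm b → a ≠ b + 1

section ctx

variable {m : ℕ} {T : Tournament V} {v : Fin m → V} {w : Fin 4 → V} {h : Fin 4 → ℕ}

lemma vtx_congr {hm : 3 ≤ m} {a b : ℕ} (hab : a = b) : vtx m v hm a = vtx m v hm b := by
  rw [hab]

variable (G : Good m V T v w h)

lemma vtx_inj {a b : ℕ} (ha : a < m) (hb : b < m)
    (hab : vtx m v G.hm a = vtx m v G.hm b) : a = b := by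
  have h2 := congrArg Fin.val (G.hv hab)
  simpa [Nat.mod_eq_of_lt ha, Nat.mod_eq_of_lt hb] using h2

lemma avv {a b : ℕ} (ha : a < m) (hb : b < m) :
    T.adj (vtx m v G.hm a) (vtx m v G.hm b) = true ↔ (b = a + 1 ∨ b + 1 < a) := by
  rw [vtx, vtx, G.hvadj]
  simp [Nat.mod_eq_of_lt ha, Nat.mod_eq_of_lt hb]

lemma awv {a : ℕ} (ha : a < m) (i : Fin 4) :
    T.adj (w i) (vtx m v G.hm a) = true ↔ a + 1 ≤ h i := by
  rw [vtx, G.hH]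
  simp [Nat.mod_eq_of_lt ha]

lemma avw {a : ℕ} (ha : a < m) (i : Fin 4) :
    T.adj (vtx m v G.hm a) (w i) = true ↔ h i ≤ a := by
  have hc : T.adj (vtx m v G.hm a) (w i) = !T.adj (w i) (vtx m v G.hm a) :=
    T.compl _ _ (G.hvw _ i)
  rw [hc, Bool.not_eq_true', ← Bool.not_eq_true, awv G ha]
  omega

lemma cover' (x : V) : (∃ a, a < m ∧ x = vtx m v G.hm a) ∨ (∃ j, x = w j) := by
  rcases G.hcover x with ⟨i, hi⟩ | ⟨j, hj⟩
  · refine Or.inl ⟨i.val, i.isLt, ?_⟩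
    rw [← hi, vtx]
    congr 1
    exact Fin.ext (by simp [Nat.mod_eq_of_lt i.isLt])
  · exact Or.inr ⟨j, hj.symm⟩

lemma fin4_mk2 (hx : 2 < 4) : (⟨2, hx⟩ : Fin 4) = 2 := rfl

lemma fin4_mk3 (hx : 3 < 4) : (⟨3, hx⟩ : Fin 4) = 3 := rfl

include G in
lemma hlt : ∀ i j : Fin 4, i < j → h j ≤ h i := by
  have A := G.hh1; have B := G.hh2; have C := G.hh3; have D := G.hh4
  have E := G.hle; have M := G.hm
  intro i j hij
  fin_cases i <;> fin_cases j <;>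
    simp only [Fin.mk_zero, Fin.mk_one, fin4_mk2, fin4_mk3, Fin.isValue] <;>
    first | exact absurd hij (by decide) | omega

lemma eq_quad {f : Fin 4 → V} {x0 x1 x2 x3 : V} (h0 : f 0 = x0) (h1 : f 1 = x1)
    (h2 : f 2 = x2) (h3 : f 3 = x3) : f = ![x0, x1, x2, x3] := by
  funext j
  fin_cases j <;> first | exact h0 | exact h1 | exact h2 | exact h3

lemma inj4 {x0 x1 x2 x3 : V} (d01 : x0 ≠ x1) (d02 : x0 ≠ x2) (d03 : x0 ≠ x3)
    (d12 : x1 ≠ x2) (d13 : x1 ≠ x3) (d23 : x2 ≠ x3) :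
    Function.Injective ![x0, x1, x2, x3] := by
  intro a b hab
  fin_cases a <;> fin_cases b <;>
    first
      | rfl
      | exact absurd hab d01 | exact absurd hab.symm d01
      | exact absurd hab d02 | exact absurd hab.symm d02
      | exact absurd hab d03 | exact absurd hab.symm d03
      | exact absurd hab d12 | exact absurd hab.symm d12
      | exact absurd hab d13 | exact absurd hab.symm d13
      | exact absurd hab d23 | exact absurd hab.symm d23

lemma quad4_mem (p q r s : ℕ) (hq : q = p + 1) (hr : r = p + 2) (hs : s = p + 3)
    (hp : p + 3 < m) :
    Function.Injective ![vtx m v G.hm p, vtx m v G.hm q, vtx m v G.hm r, vtx m v G.hm s] ∧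
    Pc T ![vtx m v G.hm p, vtx m v G.hm q, vtx m v G.hm r, vtx m v G.hm s] ∧
    Qr m v G.hm ![vtx m v G.hm p, vtx m v G.hm q, vtx m v G.hm r, vtx m v G.hm s] ∧
    (∀ d : Fin 4, Qr m v G.hm (rot d ![vtx m v G.hm p, vtx m v G.hm q, vtx m v G.hm r,
      vtx m v G.hm s]) → d = 0) := by
  subst hq hr hs
  refine ⟨?_, ?_, ?_, ?_⟩
  · refine inj4 (fun e => ?_) (fun e => ?_) (fun e => ?_) (fun e => ?_) (fun e => ?_)
      (fun e => ?_) <;> (have := vtx_inj G (by omega) (by omega) e; omega)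
  · intro k
    fin_cases k
    · exact (avv G (show p < m by omega) (show p + 1 < m by omega)).mpr (by omega)
    · exact (avv G (show p + 1 < m by omega) (show p + 2 < m by omega)).mpr (by omega)
    · exact (avv G (show p + 2 < m by omega) (show p + 3 < m by omega)).mpr (by omega)
    · exact (avv G (show p + 3 < m by omega) (show p < m by omega)).mpr (by omega)
  · refine ⟨p, by omega, rfl, fun b hbm hb => ?_⟩
    have := vtx_inj G (by omega) hbm hb
    omega
  · intro d hd
    fin_cases d
    · rfl
    · obtain ⟨a, ham, h0, hall⟩ := hd
      have e : p + 1 = a := vtx_inj G (by omega) ham h0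
      exact absurd (show a = p + 1 by omega) (hall p (by omega) rfl)
    · obtain ⟨a, ham, h0, hall⟩ := hd
      have e : p + 2 = a := vtx_inj G (by omega) ham h0
      exact absurd (show a = (p + 1) + 1 by omega) (hall (p + 1) (by omega) rfl)
    · obtain ⟨a, ham, h0, hall⟩ := hd
      have e : p + 3 = a := vtx_inj G (by omega) ham h0
      exact absurd (show a = (p + 2) + 1 by omega) (hall (p + 2) (by omega) rfl)

lemma quad3_mem (p q r : ℕ) (i : Fin 4) (hq : q = p + 1) (hr : r = p + 2)
    (hp : p + 2 < m) (hip : p + 1 ≤ h i) (hip2 : h i ≤ p + 2) :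
    Function.Injective ![vtx m v G.hm p, vtx m v G.hm q, vtx m v G.hm r, w i] ∧
    Pc T ![vtx m v G.hm p, vtx m v G.hm q, vtx m v G.hm r, w i] ∧
    Qr m v G.hm ![vtx m v G.hm p, vtx m v G.hm q, vtx m v G.hm r, w i] ∧
    (∀ d : Fin 4, Qr m v G.hm (rot d ![vtx m v G.hm p, vtx m v G.hm q, vtx m v G.hm r,
      w i]) → d = 0) := by
  subst hq hr
  refine ⟨?_, ?_, ?_, ?_⟩
  · refine inj4 (fun e => ?_) (fun e => ?_) (G.hvw _ i) (fun e => ?_) (G.hvw _ i)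
      (G.hvw _ i) <;> (have := vtx_inj G (by omega) (by omega) e; omega)
  · intro k
    fin_cases k
    · exact (avv G (show p < m by omega) (show p + 1 < m by omega)).mpr (by omega)
    · exact (avv G (show p + 1 < m by omega) (show p + 2 < m by omega)).mpr (by omega)
    · exact (avw G (show p + 2 < m by omega) i).mpr (by omega)
    · exact (awv G (show p < m by omega) i).mpr (by omega)
  · exact ⟨p, by omega, rfl, fun b hbm hb => absurd hb.symm (G.hvw _ _)⟩
  · intro d hd
    fin_cases d
    · rfl
    · obtain ⟨a, ham, h0, hall⟩ := hd
      have e : p + 1 = a := vtx_inj G (by omega) ham h0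
      exact absurd (show a = p + 1 by omega) (hall p (by omega) rfl)
    · obtain ⟨a, ham, h0, hall⟩ := hd
      have e : p + 2 = a := vtx_inj G (by omega) ham h0
      exact absurd (show a = (p + 1) + 1 by omega) (hall (p + 1) (by omega) rfl)
    · obtain ⟨a, ham, h0, hall⟩ := hd
      exact absurd h0.symm (G.hvw _ _)

lemma quad2_mem (p q : ℕ) (i j : Fin 4) (hq : q = p + 1) (hp : p + 1 < m) (hij : i < j)
    (hi : h i ≤ p + 1) (hj : p + 1 ≤ h j) :
    Function.Injective ![vtx m v G.hm p, vtx m v G.hm q, w i, w j] ∧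
    Pc T ![vtx m v G.hm p, vtx m v G.hm q, w i, w j] ∧
    Qr m v G.hm ![vtx m v G.hm p, vtx m v G.hm q, w i, w j] ∧
    (∀ d : Fin 4, Qr m v G.hm (rot d ![vtx m v G.hm p, vtx m v G.hm q, w i, w j]) → d = 0) := by
  subst hq
  refine ⟨?_, ?_, ?_, ?_⟩
  · refine inj4 (fun e => ?_) (G.hvw _ i) (G.hvw _ j) (G.hvw _ i) (G.hvw _ j)
      (fun e => absurd (G.hw e) (ne_of_lt hij))
    have := vtx_inj G (by omega) (by omega) e; omega
  · intro k
    fin_cases k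
    · exact (avv G (show p < m by omega) (show p + 1 < m by omega)).mpr (by omega)
    · exact (avw G (show p + 1 < m by omega) i).mpr (by omega)
    · exact (G.hwadj i j).mpr hij
    · exact (awv G (show p < m by omega) j).mpr (by omega)
  · exact ⟨p, by omega, rfl, fun b hbm hb => absurd hb.symm (G.hvw _ _)⟩
  · intro d hd
    fin_cases d
    · rfl
    · obtain ⟨a, ham, h0, hall⟩ := hd
      have e : p + 1 = a := vtx_inj G (by omega) ham h0
      exact absurd (show a = p + 1 by omega) (hall p (by omega) rfl)
    · obtain ⟨a, ham, h0, hall⟩ := hd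
      exact absurd h0.symm (G.hvw _ _)
    · obtain ⟨a, ham, h0, hall⟩ := hd
      exact absurd h0.symm (G.hvw _ _)

end ctx

def psiB (m : ℕ) (v : Fin m → V) (w : Fin 4 → V) (h : Fin 4 → ℕ) (hm : 3 ≤ m) (k : ℕ) :
    Fin 4 → V :=
  if k = 0 then ![vtx m v hm (m-3), vtx m v hm (m-2), vtx m v hm (m-1), w 0]
  else if k = 1 then
    (if h 1 ≤ m - 2 then ![vtx m v hm (h 1 - 1), vtx m v hm (h 1), vtx m v hm (h 1 + 1), w 1]
     else ![vtx m v hm (m-2), vtx m v hm (m-1), w 0, w 1])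
  else if k = 2 then ![vtx m v hm (h 1 - 2), vtx m v hm (h 1 - 1), vtx m v hm (h 1), w 1]
  else if k = 3 then ![vtx m v hm (h 2 - 1), vtx m v hm (h 2), vtx m v hm (h 2 + 1), w 2]
  else if k = 4 then
    (if 2 ≤ h 2 then ![vtx m v hm (h 2 - 2), vtx m v hm (h 2 - 1), vtx m v hm (h 2), w 2]
     else ![vtx m v hm 0, vtx m v hm 1, w 2, w 3])
  else ![vtx m v hm 0, vtx m v hm 1, vtx m v hm 2, w 3]

def psi (m : ℕ) (v : Fin m → V) (w : Fin 4 → V) (h : Fin 4 → ℕ) (hm : 3 ≤ m) :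
    Fin (m - 3) ⊕ Fin 6 → Fin 4 → V
  | .inl a => ![vtx m v hm a.val, vtx m v hm (a.val + 1), vtx m v hm (a.val + 2),
      vtx m v hm (a.val + 3)]
  | .inr k => psiB m v w h hm k.val

section ctx2

variable {m : ℕ} {T : Tournament V} {v : Fin m → V} {w : Fin 4 → V} {h : Fin 4 → ℕ}
  {hm : 3 ≤ m}

lemma psiB0 : psiB m v w h hm 0 =
    ![vtx m v hm (m-3), vtx m v hm (m-2), vtx m v hm (m-1), w 0] := by
  norm_num [psiB]

lemma psiB1_pos (hc : h 1 ≤ m - 2) : psiB m v w h hm 1 =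
    ![vtx m v hm (h 1 - 1), vtx m v hm (h 1), vtx m v hm (h 1 + 1), w 1] := by
  norm_num [psiB, hc]

lemma psiB1_neg (hc : ¬ (h 1 ≤ m - 2)) : psiB m v w h hm 1 =
    ![vtx m v hm (m-2), vtx m v hm (m-1), w 0, w 1] := by
  norm_num [psiB, hc]

lemma psiB2 : psiB m v w h hm 2 =
    ![vtx m v hm (h 1 - 2), vtx m v hm (h 1 - 1), vtx m v hm (h 1), w 1] := by
  norm_num [psiB]

lemma psiB3 : psiB m v w h hm 3 =
    ![vtx m v hm (h 2 - 1), vtx m v hm (h 2), vtx m v hm (h 2 + 1), w 2] := by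
  norm_num [psiB]

lemma psiB4_pos (hc : 2 ≤ h 2) : psiB m v w h hm 4 =
    ![vtx m v hm (h 2 - 2), vtx m v hm (h 2 - 1), vtx m v hm (h 2), w 2] := by
  norm_num [psiB, hc]

lemma psiB4_neg (hc : ¬ (2 ≤ h 2)) : psiB m v w h hm 4 =
    ![vtx m v hm 0, vtx m v hm 1, w 2, w 3] := by
  norm_num [psiB, hc]

lemma psiB5 : psiB m v w h hm 5 =
    ![vtx m v hm 0, vtx m v hm 1, vtx m v hm 2, w 3] := by
  norm_num [psiB]

end ctx2

section ctx3

variable {m : ℕ} {T : Tournament V} {v : Fin m → V} {w : Fin 4 → V} {h : Fin 4 → ℕ}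
variable (G : Good m V T v w h)

include G in
lemma mem_psi : ∀ x : Fin (m - 3) ⊕ Fin 6,
    Function.Injective (psi m v w h G.hm x) ∧ Pc T (psi m v w h G.hm x) ∧
    Qr m v G.hm (psi m v w h G.hm x) ∧
    (∀ d : Fin 4, Qr m v G.hm (rot d (psi m v w h G.hm x)) → d = 0) := by
  have A := G.hh1; have B := G.hh2; have C := G.hh3; have D := G.hh4
  have E := G.hle; have M := G.hm
  rintro (⟨a, ha⟩ | ⟨k, hk⟩)
  · exact quad4_mem G a (a+1) (a+2) (a+3) rfl rfl rfl (by omega)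
  · have base : ∀ j : ℕ, psi m v w h G.hm (Sum.inr ⟨j % 6, by omega⟩) = psiB m v w h G.hm (j % 6) := fun _ => rfl
    interval_cases k
    · rw [show psi m v w h G.hm (Sum.inr ⟨0, hk⟩) = psiB m v w h G.hm 0 from rfl, psiB0]
      exact quad3_mem G (m-3) (m-2) (m-1) 0 (by omega) (by omega) (by omega) (by omega) (by omega)
    · rw [show psi m v w h G.hm (Sum.inr ⟨1, hk⟩) = psiB m v w h G.hm 1 from rfl]
      by_cases hc : h 1 ≤ m - 2
      · rw [psiB1_pos hc]
        exact quad3_mem G (h 1 - 1) (h 1) (h 1 + 1) 1 (by omega) (by omega) (by omega)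
          (by omega) (by omega)
      · rw [psiB1_neg hc]
        exact quad2_mem G (m-2) (m-1) 0 1 (by omega) (by omega) (by decide) (by omega) (by omega)
    · rw [show psi m v w h G.hm (Sum.inr ⟨2, hk⟩) = psiB m v w h G.hm 2 from rfl, psiB2]
      exact quad3_mem G (h 1 - 2) (h 1 - 1) (h 1) 1 (by omega) (by omega) (by omega)
        (by omega) (by omega)
    · rw [show psi m v w h G.hm (Sum.inr ⟨3, hk⟩) = psiB m v w h G.hm 3 from rfl, psiB3]
      exact quad3_mem G (h 2 - 1) (h 2) (h 2 + 1) 2 (by omega) (by omega) (by omega)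
        (by omega) (by omega)
    · rw [show psi m v w h G.hm (Sum.inr ⟨4, hk⟩) = psiB m v w h G.hm 4 from rfl]
      by_cases hc : 2 ≤ h 2
      · rw [psiB4_pos hc]
        exact quad3_mem G (h 2 - 2) (h 2 - 1) (h 2) 2 (by omega) (by omega) (by omega)
          (by omega) (by omega)
      · rw [psiB4_neg hc]
        exact quad2_mem G 0 1 2 3 (by omega) (by omega) (by decide) (by omega) (by omega)
    · rw [show psi m v w h G.hm (Sum.inr ⟨5, hk⟩) = psiB m v w h G.hm 5 from rfl, psiB5]
      exact quad3_mem G 0 1 2 3 (by omega) (by omega) (by omega) (by omega) (by omega)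

end ctx3


lemma inj_rot (k : Fin 4) {f : Fin 4 → V} (hf : Function.Injective f) :
    Function.Injective (rot k f) := fun a b hab => by
  have : a + k = b + k := hf hab
  exact add_right_cancel this

lemma pc_rot {T : Tournament V} (k : Fin 4) {f : Fin 4 → V} (hf : Pc T f) : Pc T (rot k f) := by
  intro i
  have := hf (i + k)
  show T.adj (f (i + k)) (f (i + 1 + k)) = true
  rwa [add_right_comm]

section ctx4

variable {m : ℕ} {T : Tournament V} {v : Fin m → V} {w : Fin 4 → V} {h : Fin 4 → ℕ}
variable (G : Good m V T v w h)

include G in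
lemma exists_root {f : Fin 4 → V} (hP : Pc T f) : ∃ k, Qr m v G.hm (rot k f) := by
  by_contra hcon
  push_neg at hcon
  have step : ∀ (i : Fin 4) (a : ℕ), a < m → f i = vtx m v G.hm a →
      ∃ b, b < m ∧ f (i + 3) = vtx m v G.hm b ∧ a = b + 1 := by
    intro i a ham hfi
    have hq := hcon i
    simp only [Qr] at hq
    push_neg at hq
    have h0 : rot i f 0 = vtx m v G.hm a := by
      show f (0 + i) = _
      rw [zero_add, hfi]
    obtain ⟨b, hbm, hb, he⟩ := hq a ham h0
    refine ⟨b, hbm, ?_, he⟩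
    rw [← hb]
    show f (i + 3) = f (3 + i)
    rw [add_comm]
  by_cases hex : ∃ (i : Fin 4) (a : ℕ), a < m ∧ f i = vtx m v G.hm a
  · obtain ⟨i, a0, h0m, h0⟩ := hex
    obtain ⟨a1, h1m, hf1, e1⟩ := step i a0 h0m h0
    obtain ⟨a2, h2m, hf2, e2⟩ := step (i + 3) a1 h1m hf1
    obtain ⟨a3, h3m, hf3, e3⟩ := step (i + 3 + 3) a2 h2m hf2
    obtain ⟨a4, h4m, hf4, e4⟩ := step (i + 3 + 3 + 3) a3 h3m hf3
    have hcirc : i + 3 + 3 + 3 + 3 = i := by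
      have hh : ∀ j : Fin 4, j + 3 + 3 + 3 + 3 = j := by decide
      exact hh i
    rw [hcirc] at hf4
    have : a4 = a0 := vtx_inj G h4m h0m (hf4.symm.trans h0)
    omega
  · push_neg at hex
    have hall : ∀ i : Fin 4, ∃ j, f i = w j := by
      intro i
      rcases cover' G (f i) with ⟨a, ham, ha⟩ | hw'
      · exact absurd ha (hex i a ham)
      · exact hw'
    choose σ hσ using hall
    have mono : ∀ i : Fin 4, σ i < σ (i + 1) := by
      intro i
      have hpi := hP i
      rw [hσ i, hσ (i + 1), G.hwadj] at hpi
      exact hpi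
    have l0 := mono 0; have l1 := mono 1; have l2 := mono 2; have l3 := mono 3
    have : σ 0 < σ 0 := lt_trans (lt_trans (lt_trans l0 l1) l2) l3
    exact absurd this (lt_irrefl _)

include G in
lemma classify {f : Fin 4 → V} (hP : Pc T f) (hQ : Qr m v G.hm f) :
    ∃ x, f = psi m v w h G.hm x := by
  obtain ⟨a, ham, hf0, hroot⟩ := hQ
  have A := G.hh1; have B := G.hh2; have C := G.hh3; have D := G.hh4
  have E := G.hle; have M := G.hm
  have e01 : T.adj (f 0) (f 1) = true := hP 0
  have e12 : T.adj (f 1) (f 2) = true := hP 1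
  have e23 : T.adj (f 2) (f 3) = true := hP 2
  have e30 : T.adj (f 3) (f 0) = true := hP 3
  rcases cover' G (f 1) with ⟨b, hbm, hb⟩ | ⟨i1, hi1⟩
  · rw [hf0, hb, avv G ham hbm] at e01
    rcases cover' G (f 2) with ⟨c, hcm, hc⟩ | ⟨i2, hi2⟩
    · rw [hb, hc, avv G hbm hcm] at e12
      rcases cover' G (f 3) with ⟨d, hdm, hd⟩ | ⟨i3, hi3⟩
      · -- pattern v v v v
        rw [hc, hd, avv G hcm hdm] at e23
        rw [hd, hf0, avv G hdm ham] at e30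
        have hr := hroot d hdm hd
        have ham3 : a < m - 3 := by omega
        refine ⟨Sum.inl ⟨a, ham3⟩, ?_⟩
        exact eq_quad hf0 (hb.trans (vtx_congr (show b = a + 1 by omega)))
          (hc.trans (vtx_congr (show c = a + 2 by omega)))
          (hd.trans (vtx_congr (show d = a + 3 by omega)))
      · -- pattern v v v w
        rw [hc, hi3, avw G hcm i3] at e23
        rw [hi3, hf0, awv G ham i3] at e30
        have hb' : b = a + 1 := by omega
        have hc' : c = a + 2 := by omega
        fin_cases i3 <;>
          simp only [Fin.mk_zero, Fin.mk_one, fin4_mk2, fin4_mk3, Fin.isValue] at e23 e30 hi3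
        · refine ⟨Sum.inr ⟨0, by norm_num⟩, ?_⟩
          show f = psiB m v w h G.hm 0
          rw [psiB0]
          exact eq_quad (hf0.trans (vtx_congr (by omega))) (hb.trans (vtx_congr (by omega)))
            (hc.trans (vtx_congr (by omega))) hi3
        · rcases (show h 1 = a + 1 ∨ h 1 = a + 2 by omega) with hh | hh
          · refine ⟨Sum.inr ⟨1, by norm_num⟩, ?_⟩
            show f = psiB m v w h G.hm 1
            rw [psiB1_pos (by omega)]
            exact eq_quad (hf0.trans (vtx_congr (by omega))) (hb.trans (vtx_congr (by omega)))
              (hc.trans (vtx_congr (by omega))) hi3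
          · refine ⟨Sum.inr ⟨2, by norm_num⟩, ?_⟩
            show f = psiB m v w h G.hm 2
            rw [psiB2]
            exact eq_quad (hf0.trans (vtx_congr (by omega))) (hb.trans (vtx_congr (by omega)))
              (hc.trans (vtx_congr (by omega))) hi3
        · rcases (show h 2 = a + 1 ∨ h 2 = a + 2 by omega) with hh | hh
          · refine ⟨Sum.inr ⟨3, by norm_num⟩, ?_⟩
            show f = psiB m v w h G.hm 3
            rw [psiB3]
            exact eq_quad (hf0.trans (vtx_congr (by omega))) (hb.trans (vtx_congr (by omega)))
              (hc.trans (vtx_congr (by omega))) hi3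
          · refine ⟨Sum.inr ⟨4, by norm_num⟩, ?_⟩
            show f = psiB m v w h G.hm 4
            rw [psiB4_pos (by omega)]
            exact eq_quad (hf0.trans (vtx_congr (by omega))) (hb.trans (vtx_congr (by omega)))
              (hc.trans (vtx_congr (by omega))) hi3
        · refine ⟨Sum.inr ⟨5, by norm_num⟩, ?_⟩
          show f = psiB m v w h G.hm 5
          rw [psiB5]
          exact eq_quad (hf0.trans (vtx_congr (by omega))) (hb.trans (vtx_congr (by omega)))
            (hc.trans (vtx_congr (by omega))) hi3
    · -- f 2 = w i2
      rw [hb, hi2, avw G hbm i2] at e12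
      rcases cover' G (f 3) with ⟨c, hcm, hc⟩ | ⟨i3, hi3⟩
      · -- pattern v v w v : impossible
        rw [hi2, hc, awv G hcm i2] at e23
        rw [hc, hf0, avv G hcm ham] at e30
        have hr := hroot c hcm hc
        exfalso; omega
      · -- pattern v v w w
        rw [hi2, hi3, G.hwadj] at e23
        rw [hi3, hf0, awv G ham i3] at e30
        have hlt23 := hlt G i2 i3 e23
        have hb' : b = a + 1 := by omega
        have hia : h i2 = a + 1 := by omega
        have hja : h i3 = a + 1 := by omega
        fin_cases i2 <;> fin_cases i3 <;>
          simp only [Fin.mk_zero, Fin.mk_one, fin4_mk2, fin4_mk3, Fin.isValue]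
            at e23 hia hja hi2 hi3 <;>
          first
            | exact absurd e23 (by decide)
            | (refine ⟨Sum.inr ⟨1, by norm_num⟩, ?_⟩
               show f = psiB m v w h G.hm 1
               rw [psiB1_neg (by omega)]
               exact eq_quad (hf0.trans (vtx_congr (by omega)))
                 (hb.trans (vtx_congr (by omega))) hi2 hi3)
            | (refine ⟨Sum.inr ⟨4, by norm_num⟩, ?_⟩
               show f = psiB m v w h G.hm 4
               rw [psiB4_neg (by omega)]
               exact eq_quad (hf0.trans (vtx_congr (by omega)))
                 (hb.trans (vtx_congr (by omega))) hi2 hi3)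
            | (exfalso; omega)
  · -- f 1 = w i1
    rw [hf0, hi1, avw G ham i1] at e01
    rcases cover' G (f 2) with ⟨b, hbm, hb⟩ | ⟨i2, hi2⟩
    · rw [hi1, hb, awv G hbm i1] at e12
      rcases cover' G (f 3) with ⟨c, hcm, hc⟩ | ⟨i3, hi3⟩
      · -- pattern v w v v : impossible
        rw [hb, hc, avv G hbm hcm] at e23
        rw [hc, hf0, avv G hcm ham] at e30
        have hr := hroot c hcm hc
        exfalso; omega
      · -- pattern v w v w : impossible
        rw [hb, hi3, avw G hbm i3] at e23
        rw [hi3, hf0, awv G ham i3] at e30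
        exfalso; omega
    · rw [hi1, hi2, G.hwadj] at e12
      rcases cover' G (f 3) with ⟨c, hcm, hc⟩ | ⟨i3, hi3⟩
      · -- pattern v w w v : impossible
        rw [hi2, hc, awv G hcm i2] at e23
        rw [hc, hf0, avv G hcm ham] at e30
        have hr := hroot c hcm hc
        have h12 := hlt G i1 i2 e12
        exfalso; omega
      · -- pattern v w w w : impossible
        rw [hi2, hi3, G.hwadj] at e23
        rw [hi3, hf0, awv G ham i3] at e30
        have h13 := hlt G i1 i3 (lt_trans e12 e23)
        exfalso; omega

include G in
lemma psi_inj : Function.Injective (psi m v w h G.hm) := by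
  have A := G.hh1; have B := G.hh2; have C := G.hh3; have D := G.hh4
  have E := G.hle; have M := G.hm
  have W3 : ∀ k : ℕ, k < 6 → ∃ j, psiB m v w h G.hm k 3 = w j := by
    intro k hk
    interval_cases k
    · exact ⟨0, by rw [psiB0]; rfl⟩
    · by_cases hc : h 1 ≤ m - 2
      · exact ⟨1, by rw [psiB1_pos hc]; rfl⟩
      · exact ⟨1, by rw [psiB1_neg hc]; rfl⟩
    · exact ⟨1, by rw [psiB2]; rfl⟩
    · exact ⟨2, by rw [psiB3]; rfl⟩
    · by_cases hc : 2 ≤ h 2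
      · exact ⟨2, by rw [psiB4_pos hc]; rfl⟩
      · exact ⟨3, by rw [psiB4_neg hc]; rfl⟩
    · exact ⟨3, by rw [psiB5]; rfl⟩
  intro x y e
  rcases x with ⟨a, ha⟩ | ⟨k, hk⟩ <;> rcases y with ⟨a', ha'⟩ | ⟨k', hk'⟩
  · have e0 : vtx m v G.hm a = vtx m v G.hm a' := congrFun e 0
    have := vtx_inj G (by omega) (by omega) e0
    simp only [Sum.inl.injEq, Fin.mk.injEq]
    omega
  · obtain ⟨j, hj⟩ := W3 k' hk'
    have e3 : vtx m v G.hm (a + 3) = psiB m v w h G.hm k' 3 := congrFun e 3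
    rw [hj] at e3
    exact absurd e3 (G.hvw _ _)
  · obtain ⟨j, hj⟩ := W3 k hk
    have e3 : psiB m v w h G.hm k 3 = vtx m v G.hm (a' + 3) := congrFun e 3
    rw [hj] at e3
    exact absurd e3.symm (G.hvw _ _)
  · have ee : psiB m v w h G.hm k = psiB m v w h G.hm k' := e
    simp only [Sum.inr.injEq, Fin.mk.injEq]
    have E1 : psiB m v w h G.hm 1 =
        ![vtx m v G.hm (h 1 - 1), vtx m v G.hm (h 1), vtx m v G.hm (h 1 + 1), w 1] ∨
        psiB m v w h G.hm 1 = ![vtx m v G.hm (m-2), vtx m v G.hm (m-1), w 0, w 1] := by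
      by_cases hc : h 1 ≤ m - 2
      · exact Or.inl (psiB1_pos hc)
      · exact Or.inr (psiB1_neg hc)
    have E4 : psiB m v w h G.hm 4 =
        ![vtx m v G.hm (h 2 - 2), vtx m v G.hm (h 2 - 1), vtx m v G.hm (h 2), w 2] ∨
        psiB m v w h G.hm 4 = ![vtx m v G.hm 0, vtx m v G.hm 1, w 2, w 3] := by
      by_cases hc : 2 ≤ h 2
      · exact Or.inl (psiB4_pos hc)
      · exact Or.inr (psiB4_neg hc)
    rcases E1 with E1 | E1 <;> rcases E4 with E4 | E4 <;>
      interval_cases k <;> interval_cases k' <;>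
      first
        | rfl
        | (simp only [psiB0, E1, psiB2, psiB3, E4, psiB5] at ee
           first
             | (exact absurd (congrFun ee 3) (G.hvw _ _))
             | (exact absurd (congrFun ee 3).symm (G.hvw _ _))
             | (exact absurd (G.hw (congrFun ee 3)) (by decide))
             | (exact absurd (congrFun ee 2) (G.hvw _ _))
             | (exact absurd (congrFun ee 2).symm (G.hvw _ _))
             | (exact absurd (G.hw (congrFun ee 2)) (by decide))
             | (have := vtx_inj G (by omega) (by omega) (congrFun ee 0); omega)
             | (have := vtx_inj G (by omega) (by omega) (congrFun ee 1); omega))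

include G in
lemma card_count :
    Nat.card {f : Fin 4 → V // Function.Injective f ∧
      ∀ i : Fin 4, T.adj (f i) (f (Tournament.cyc i)) = true} = 4 * (m - 3 + 6) := by
  classical
  have cyc4 : ∀ i : Fin 4, Tournament.cyc i = i + 1 := by decide
  set C := {g : Fin 4 → V // Function.Injective g ∧ Pc T g ∧ Qr m v G.hm g} with hC
  set S := {f : Fin 4 → V // Function.Injective f ∧
      ∀ i : Fin 4, T.adj (f i) (f (Tournament.cyc i)) = true} with hS
  let Φ : Fin 4 × C → S := fun kg =>
    ⟨rot kg.1 kg.2.1, inj_rot kg.1 kg.2.2.1,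
      fun i => by rw [cyc4]; exact pc_rot kg.1 kg.2.2.2.1 i⟩
  have hbij : Function.Bijective Φ := by
    constructor
    · rintro ⟨k, g, hg⟩ ⟨k', g', hg'⟩ hΦ
      have hEq : rot k g = rot k' g' := congrArg Subtype.val hΦ
      have key1 : ∀ j k' : Fin 4, j - k' + k' = j := by decide
      have key2 : ∀ j k k' : Fin 4, j - k' + k = j + (k - k') := by decide
      have hg'eq : g' = rot (k - k') g := by
        funext j
        have hj := congrFun hEq (j - k')
        simp only [rot] at hj
        rw [key1] at hj
        rw [← hj]
        show g (j - k' + k) = g (j + (k - k'))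
        rw [key2]
      obtain ⟨x, hx⟩ := classify G hg.2.1 hg.2.2
      have hq' : Qr m v G.hm (rot (k - k') (psi m v w h G.hm x)) := by
        rw [← hx, ← hg'eq]; exact hg'.2.2
      have hd0 : k - k' = 0 := (mem_psi G x).2.2.2 _ hq'
      have hkk : k = k' := by
        have kk : ∀ k k' : Fin 4, k - k' = 0 → k = k' := by decide
        exact kk _ _ hd0
      subst hkk
      have hgg : g = g' := by
        rw [hg'eq, hd0]
        funext j
        show g j = g (j + 0)
        rw [add_zero]
      simp only [Prod.mk.injEq]
      exact ⟨trivial, Subtype.ext hgg⟩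
    · rintro ⟨f, hInj, hCyc⟩
      have hPf : Pc T f := fun i => by have := hCyc i; rwa [cyc4] at this
      obtain ⟨k, hk⟩ := exists_root G hPf
      refine ⟨⟨-k, ⟨rot k f, inj_rot k hInj, pc_rot k hPf, hk⟩⟩, ?_⟩
      apply Subtype.ext
      show rot (-k) (rot k f) = f
      funext j
      show f (j + -k + k) = f j
      have kk : ∀ j k : Fin 4, j + -k + k = j := by decide
      rw [kk]
  let Ψ : (Fin (m - 3) ⊕ Fin 6) → C := fun x =>
    ⟨psi m v w h G.hm x, (mem_psi G x).1, (mem_psi G x).2.1, (mem_psi G x).2.2.1⟩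
  have hbij2 : Function.Bijective Ψ := by
    constructor
    · intro x y hxy
      exact psi_inj G (congrArg Subtype.val hxy)
    · rintro ⟨f, hi, hp, hq⟩
      obtain ⟨x, hx⟩ := classify G hp hq
      exact ⟨x, Subtype.ext hx.symm⟩
  have c1 : Nat.card (Fin 4 × C) = Nat.card S := Nat.card_eq_of_bijective Φ hbij
  have c2 : Nat.card (Fin (m - 3) ⊕ Fin 6) = Nat.card C := Nat.card_eq_of_bijective Ψ hbij2
  rw [← c1, Nat.card_prod, ← c2]
  simp [Nat.card_eq_fintype_card]

end ctx4


end Statement18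
/-- A member `T` of the class `H_{n-3,n}` (`n ≥ 7`), given by its standard
description via the critical path `v_1,…,v_{n-4}`, the non-critical vertices
`w_1,w_2,w_3,w_4` and the parameters `h_1 = n-5, h_2, h_3, h_4 = 1`, satisfies
`c_4(T) = n - 1` whenever `h_3 ≤ h_2 - 1`. -/
theorem statement_18 (n : ℕ) (hn : 7 ≤ n) {V : Type} (T : Tournament V)
    (hcard : Nat.card V = n) (hT : T.Strong) (hdiam : T.diam = n - 3)
    (v : Fin (n - 4) → V) (w : Fin 4 → V) (h : Fin 4 → ℕ)
    (hv : Function.Injective v) (hw : Function.Injective w)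
    (hvw : ∀ i j, v i ≠ w j)
    (hcover : ∀ x : V, (∃ i, v i = x) ∨ (∃ j, w j = x))
    (hvadj : ∀ i j : Fin (n - 4),
      (T.adj (v i) (v j) = true ↔ (j.val = i.val + 1 ∨ j.val + 1 < i.val)))
    (hwadj : ∀ i j : Fin 4, (T.adj (w i) (w j) = true ↔ i < j))
    (hH : ∀ (i : Fin 4) (k : Fin (n - 4)),
      (T.adj (w i) (v k) = true ↔ k.val + 1 ≤ h i))
    (hh1 : h 0 = n - 5) (hh4 : h 3 = 1)
    (hh2 : 1 ≤ h 1 ∧ h 1 ≤ n - 5) (hh3 : 1 ≤ h 2 ∧ h 2 ≤ n - 5)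
    (hmono : ∀ r s : Fin 4, r ≤ s → h s ≤ h r + 1)
    (hle : h 2 + 1 ≤ h 1) :
    T.circCount 4 = n - 1 := by
  have G : Statement18.Good (n - 4) V T v w h :=
    { hm := by omega
      hv := hv
      hw := hw
      hvw := hvw
      hcover := hcover
      hvadj := hvadj
      hwadj := hwadj
      hH := hH
      hh1 := by rw [hh1]; omega
      hh4 := hh4
      hh2 := ⟨by omega, by have := hh2.2; omega⟩
      hh3 := hh3.1
      hle := hle }
  have harith : 4 * (n - 4 - 3 + 6) / 4 = n - 1 := by omega
  show Nat.card {f : Fin 4 → V // Function.Injective f ∧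
      ∀ i : Fin 4, T.adj (f i) (f (Tournament.cyc i)) = true} / 4 = n - 1
  exact (congrArg (fun t => t / 4) (Statement18.card_count G)).trans harith
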